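/- Let c be any of the three reachability criteria c_All, c_None, c_Match. For every SPARQL graph pattern P there exists an LDQL query q such that [[P]]_{c,S}^W = ⟦q⟧_W^S for every Web of Linked Data W and every finite set S of URIs. -/

import Mathlib

namespace LDQLFormal

noncomputable section
open Classical

/-! ### Basic RDF model -/

abbrev URI := ℕ
abbrev BNodeId := ℕ
abbrev LitId := ℕ
abbrev Var := ℕ
abbrev Doc := ℕ

/-- Subject terms: URIs or blank nodes. -/
inductive Subj where
  | uri (u : URI)
  | bnode (b : BNodeId)
deriving DecidableEq

/-- RDF terms (objects): URIs, blank nodes, or literals. -/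
inductive Obj where
  | uri (u : URI)
  | bnode (b : BNodeId)
  | lit (l : LitId)
deriving DecidableEq

structure RDFTriple where
  s : Subj
  p : URI
  o : Obj
deriving DecidableEq

def Subj.toObj : Subj → Obj
  | .uri u => .uri u
  | .bnode b => .bnode b

/-- The set of URIs occurring in an RDF triple. -/
def urisOf (t : RDFTriple) : Set URI :=
  {u | t.s = .uri u ∨ t.p = u ∨ t.o = .uri u}

/-- A Web of Linked Data: a finite set of documents, the data in each
document (a finite set of RDF triples), and a surjective partial function
`adoc` from URIs to documents. -/
structure Web where
  docs : Set Doc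
  finite_docs : docs.Finite
  data : Doc → Finset RDFTriple
  adoc : URI → Option Doc
  adoc_mem : ∀ u d, adoc u = some d → d ∈ docs
  adoc_surj : ∀ d ∈ docs, ∃ u, adoc u = some d

/-- Link graph edge `(d, (t,u), d')`. -/
def Web.edge (W : Web) (d : Doc) (t : RDFTriple) (u : URI) (d' : Doc) : Prop :=
  d ∈ W.docs ∧ t ∈ W.data d ∧ u ∈ urisOf t ∧ W.adoc u = some d'

/-! ### Link patterns -/

/-- Components of a link pattern drawn from `U ∪ {*, +}`. -/
inductive LPUP where
  | uri (u : URI)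
  | star
  | plus
deriving DecidableEq

/-- Components of a link pattern drawn from `U ∪ Lit ∪ {*, +}`. -/
inductive LPULP where
  | uri (u : URI)
  | lit (l : LitId)
  | star
  | plus
deriving DecidableEq

structure LinkPattern where
  c1 : LPUP
  c2 : LPUP
  c3 : LPULP

def matchSubj (y : LPUP) (uctx : URI) (x : Subj) : Prop :=
  match y with
  | .uri w => x = .uri w
  | .star => True
  | .plus => x = .uri uctx

def matchPred (y : LPUP) (uctx : URI) (x : URI) : Prop :=
  match y with
  | .uri w => x = w
  | .star => True
  | .plus => x = uctx

def matchObj (y : LPULP) (uctx : URI) (x : Obj) : Prop :=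
  match y with
  | .uri w => x = .uri w
  | .lit l => x = .lit l
  | .star => True
  | .plus => x = .uri uctx

/-- An edge with label `(t,u)` matches a link pattern in the context of `uctx`. -/
def lpMatch (lp : LinkPattern) (uctx : URI) (t : RDFTriple) (u : URI) : Prop :=
  ((lp.c1 = .star ∧ t.s = .uri u) ∨ (lp.c2 = .star ∧ t.p = u) ∨ (lp.c3 = .star ∧ t.o = .uri u))
  ∧ matchSubj lp.c1 uctx t.s ∧ matchPred lp.c2 uctx t.p ∧ matchObj lp.c3 uctx t.o

/-! ### Solution mappings -/

abbrev Mapping := Var → Option Obj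

def mdom (μ : Mapping) : Set Var := {v | μ v ≠ none}

def emptyMap : Mapping := fun _ => none

def single (v : Var) (o : Obj) : Mapping := fun w => if w = v then some o else none

def compatible (μ1 μ2 : Mapping) : Prop :=
  ∀ v a b, μ1 v = some a → μ2 v = some b → a = b

def munion (μ1 μ2 : Mapping) : Mapping := fun v =>
  match μ1 v with
  | some a => some a
  | none => μ2 v

/-- Join of two sets of solution mappings. -/
def mjoin (Ω1 Ω2 : Set Mapping) : Set Mapping :=
  {μ | ∃ μ1 ∈ Ω1, ∃ μ2 ∈ Ω2, compatible μ1 μ2 ∧ μ = munion μ1 μ2}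

/-- Restriction of a mapping to a finite set of variables. -/
def restrictV (V : Finset Var) (μ : Mapping) : Mapping := fun v =>
  if v ∈ V then μ v else none

/-! ### SPARQL graph patterns -/

inductive PTerm where
  | var (v : Var)
  | term (o : Obj)
deriving DecidableEq

structure TriplePattern where
  sj : PTerm
  pr : PTerm
  ob : PTerm
deriving DecidableEq

def PTerm.varsOf : PTerm → Set Var
  | .var v => {v}
  | .term _ => ∅

def TriplePattern.varsOf (t : TriplePattern) : Set Var :=
  t.sj.varsOf ∪ t.pr.varsOf ∪ t.ob.varsOf

def pval (μ : Mapping) : PTerm → Option Obj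
  | .var v => μ v
  | .term o => some o

def objToSubj : Obj → Option Subj
  | .uri u => some (.uri u)
  | .bnode b => some (.bnode b)
  | .lit _ => none

def objToURI : Obj → Option URI
  | .uri u => some u
  | _ => none

/-- `tpInst μ tp = some t` iff `μ[tp] = t` (all variables of `tp` bound by `μ`
and the instantiation is a well-formed RDF triple). -/
def tpInst (μ : Mapping) (t : TriplePattern) : Option RDFTriple := do
  let s ← pval μ t.sj
  let s' ← objToSubj s
  let p ← pval μ t.pr
  let p' ← objToURI p
  let o ← pval μ t.ob
  return ⟨s', p', o⟩

/-- Filter conditions. -/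
inductive Cond where
  | eq (a b : PTerm)
  | neq (a b : PTerm)
  | and (c1 c2 : Cond)
  | or (c1 c2 : Cond)
  | not (c : Cond)

def condHolds (μ : Mapping) : Cond → Prop
  | .eq a b => ∃ x, pval μ a = some x ∧ pval μ b = some x
  | .neq a b => ∃ x y, pval μ a = some x ∧ pval μ b = some y ∧ x ≠ y
  | .and c1 c2 => condHolds μ c1 ∧ condHolds μ c2
  | .or c1 c2 => condHolds μ c1 ∨ condHolds μ c2
  | .not c => ¬ condHolds μ c

/-- SPARQL graph patterns, built from triple patterns with
AND, UNION, OPT, FILTER, GRAPH and BIND. -/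
inductive GP where
  | empty
  | tp (t : TriplePattern)
  | and (g1 g2 : GP)
  | union (g1 g2 : GP)
  | opt (g1 g2 : GP)
  | filter (g : GP) (c : Cond)
  | graphU (u : URI) (g : GP)
  | graphV (v : Var) (g : GP)
  | bind (g : GP) (o : Obj) (v : Var)

/-- An RDF dataset: a default graph together with named graphs. -/
structure RDFDataset where
  dflt : Set RDFTriple
  named : URI → Option (Set RDFTriple)

/-- Standard set-based SPARQL evaluation of a graph pattern over an RDF
dataset `D` with active graph `G`. -/
def evalGP (D : RDFDataset) : GP → Set RDFTriple → Set Mapping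
  | .empty, _ => {emptyMap}
  | .tp t, G => {μ | mdom μ = t.varsOf ∧ ∃ tr ∈ G, tpInst μ t = some tr}
  | .and g1 g2, G => mjoin (evalGP D g1 G) (evalGP D g2 G)
  | .union g1 g2, G => evalGP D g1 G ∪ evalGP D g2 G
  | .opt g1 g2, G =>
      mjoin (evalGP D g1 G) (evalGP D g2 G) ∪
        {μ | μ ∈ evalGP D g1 G ∧ ∀ μ2 ∈ evalGP D g2 G, ¬ compatible μ μ2}
  | .filter g c, G => {μ | μ ∈ evalGP D g G ∧ condHolds μ c}
  | .graphU u g, _ => {μ | ∃ G', D.named u = some G' ∧ μ ∈ evalGP D g G'}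
  | .graphV v g, _ =>
      {μ | ∃ u G', D.named u = some G' ∧ ∃ μ' ∈ evalGP D g G',
            compatible μ' (single v (.uri u)) ∧ μ = munion μ' (single v (.uri u))}
  | .bind g o v, G => {μ' | ∃ μ ∈ evalGP D g G, μ v = none ∧ μ' = munion μ (single v o)}

/-! ### LDQL syntax -/

mutual
/-- LDQL queries. -/
inductive LDQL where
  | base (l : LPE) (P : GP)
  | seedU (U0 : Finset URI) (q : LDQL)
  | seedV (v : Var) (q : LDQL)
  | qand (q1 q2 : LDQL)
  | qunion (q1 q2 : LDQL)
  | proj (V0 : Finset Var) (q : LDQL)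

/-- Link path expressions. -/
inductive LPE where
  | eps
  | pat (lp : LinkPattern)
  | seq (l1 l2 : LPE)
  | alt (l1 l2 : LPE)
  | star (l : LPE)
  | test (l : LPE)
  | sub (v : Var) (q : LDQL)
end

/-- `dataset_W(U0)`. -/
def datasetW (W : Web) (U0 : Set URI) : RDFDataset where
  dflt := {t | ∃ u ∈ U0, ∃ d, W.adoc u = some d ∧ t ∈ W.data d}
  named := fun u =>
    if u ∈ U0 then (W.adoc u).map (fun d => ((W.data d : Finset RDFTriple) : Set RDFTriple))
    else none

/-! ### LDQL semantics -/

mutual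
/-- The S-based evaluation `⟦q⟧_W^S` of an LDQL query. -/
def evalQ (W : Web) : LDQL → Set URI → Set Mapping
  | .base l P, S =>
      evalGP (datasetW W {u' | ∃ u ∈ S, u' ∈ evalL W l u}) P
        (datasetW W {u' | ∃ u ∈ S, u' ∈ evalL W l u}).dflt
  | .seedU U0 q, _ => evalQ W q ↑U0
  | .seedV v q, _ => ⋃ u : URI, mjoin (evalQ W q {u}) {single v (.uri u)}
  | .qand q1 q2, S => mjoin (evalQ W q1 S) (evalQ W q2 S)
  | .qunion q1 q2, S => evalQ W q1 S ∪ evalQ W q2 S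
  | .proj V0 q, S => (restrictV V0) '' (evalQ W q S)

/-- The `uctx`-based evaluation `⟦l⟧_W^uctx` of a link path expression. -/
def evalL (W : Web) : LPE → URI → Set URI
  | .eps, u => if (W.adoc u).isSome then {u} else ∅
  | .pat lp, u =>
      {u' | ∃ d, W.adoc u = some d ∧ ∃ t d', W.edge d t u' d' ∧ lpMatch lp u t u'}
  | .seq l1 l2, u => {u'' | ∃ u', u' ∈ evalL W l1 u ∧ u'' ∈ evalL W l2 u'}
  | .alt l1 l2, u => evalL W l1 u ∪ evalL W l2 u
  | .star l, u =>
      {u' | (W.adoc u).isSome ∧ Relation.ReflTransGen (fun a b => b ∈ evalL W l a) u u'}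
  | .test l, u => {u' | u' = u ∧ evalL W l u ≠ ∅}
  | .sub v q, u =>
      {u' | (W.adoc u).isSome ∧ ∃ μ ∈ evalQ W q {u}, μ v = some (.uri u')}
end

/-- Semantic equivalence of LDQL queries. -/
def equivQ (q q' : LDQL) : Prop :=
  ∀ (W : Web) (S : Set URI), S.Finite → evalQ W q S = evalQ W q' S


/-! ### LPEs built only from ε, ⟨?v,q⟩ and (·)* -/

mutual
/-- All LPEs occurring in the query consist only of `ε`, `⟨?v,q⟩` and `(·)*`. -/
def LDQL.simple : LDQL → Prop
  | .base l _ => l.simple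
  | .seedU _ q => q.simple
  | .seedV _ q => q.simple
  | .qand q1 q2 => q1.simple ∧ q2.simple
  | .qunion q1 q2 => q1.simple ∧ q2.simple
  | .proj _ q => q.simple

/-- The LPE consists only of `ε`, `⟨?v,q⟩` and `(·)*`. -/
def LPE.simple : LPE → Prop
  | .eps => True
  | .pat _ => False
  | .seq _ _ => False
  | .alt _ _ => False
  | .star l => l.simple
  | .test _ => False
  | .sub _ q => q.simple
end

/-! ### Property paths under context-based semantics -/

/-- Property path expressions. -/
inductive PP where
  | uri (p : URI)
  | neg (us : List URI)
  | seq (r1 r2 : PP)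
  | alt (r1 r2 : PP)
  | star (r : PP)

/-- Terms allowed in PP-patterns: URIs, literals and variables. -/
inductive PPTerm where
  | uri (u : URI)
  | lit (l : LitId)
  | var (v : Var)

/-- The context selector `C_W`. -/
def CW (W : Web) (a : Obj) : Set RDFTriple :=
  {t | ∃ u d, a = .uri u ∧ W.adoc u = some d ∧ t ∈ W.data d ∧ t.s = .uri u}

/-- The RDF terms occurring in triples of documents of `W`. -/
def termsW (W : Web) : Set Obj :=
  {a | ∃ d ∈ W.docs, ∃ t ∈ W.data d, a = t.s.toObj ∨ a = .uri t.p ∨ a = t.o}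

/-- The binary relation on RDF terms induced by a PP expression under
context-based semantics. -/
def ppRel (W : Web) : PP → Obj → Obj → Prop
  | .uri p, a, b => ∃ s, objToSubj a = some s ∧ (⟨s, p, b⟩ : RDFTriple) ∈ CW W a
  | .neg us, a, b => ∃ p, p ∉ us ∧ ∃ s, objToSubj a = some s ∧ (⟨s, p, b⟩ : RDFTriple) ∈ CW W a
  | .seq r1 r2, a, b => ∃ m, ppRel W r1 a m ∧ ppRel W r2 m b
  | .alt r1 r2, a, b => ppRel W r1 a b ∨ ppRel W r2 a b
  | .star r, a, b => (a = b ∧ a ∈ termsW W) ∨ Relation.TransGen (ppRel W r) a b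

def PPTerm.toPval (μ : Mapping) : PPTerm → Option Obj
  | .uri u => some (.uri u)
  | .lit l => some (.lit l)
  | .var v => μ v

def ppVars (α β : PPTerm) : Set Var := {v | α = .var v ∨ β = .var v}

/-- The context-based evaluation `⟦(α,r,β)⟧_ctxt^W` of a PP-pattern. -/
def ctxtEvalPat (W : Web) (α : PPTerm) (r : PP) (β : PPTerm) : Set Mapping :=
  {μ | mdom μ = ppVars α β ∧
    ∃ a b, α.toPval μ = some a ∧ β.toPval μ = some b ∧ ppRel W r a b}

/-- PP-based SPARQL queries. -/
inductive PPQ where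
  | pat (α : PPTerm) (r : PP) (β : PPTerm)
  | and (R1 R2 : PPQ)
  | union (R1 R2 : PPQ)
  | opt (R1 R2 : PPQ)
  | filter (R : PPQ) (c : Cond)

/-- The context-based evaluation `⟦R⟧_ctxt^W` of a PP-based SPARQL query. -/
def evalPPQ (W : Web) : PPQ → Set Mapping
  | .pat α r β => ctxtEvalPat W α r β
  | .and R1 R2 => mjoin (evalPPQ W R1) (evalPPQ W R2)
  | .union R1 R2 => evalPPQ W R1 ∪ evalPPQ W R2
  | .opt R1 R2 =>
      mjoin (evalPPQ W R1) (evalPPQ W R2) ∪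
        {μ | μ ∈ evalPPQ W R1 ∧ ∀ μ2 ∈ evalPPQ W R2, ¬ compatible μ μ2}
  | .filter R c => {μ | μ ∈ evalPPQ W R ∧ condHolds μ c}

/-! ### NautiLOD -/

/-- NautiLOD expressions (without action rules). -/
inductive NLOD where
  | fwd (p : URI)
  | bwd (p : URI)
  | any
  | seq (n1 n2 : NLOD)
  | alt (n1 n2 : NLOD)
  | star (n : NLOD)
  | ask (n : NLOD) (P : GP)

/-- Dataset used for evaluating an ASK pattern over the data of a single document. -/
def askDS (W : Web) (d : Doc) : RDFDataset :=
  ⟨((W.data d : Finset RDFTriple) : Set RDFTriple), fun _ => none⟩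

/-- NautiLOD semantics `⟦n⟧_W^u`. -/
def nlEval (W : Web) : NLOD → URI → Set URI
  | .fwd p, u => {u' | ∃ d, W.adoc u = some d ∧ (⟨.uri u, p, .uri u'⟩ : RDFTriple) ∈ W.data d}
  | .bwd p, u => {u' | ∃ d, W.adoc u = some d ∧ (⟨.uri u', p, .uri u⟩ : RDFTriple) ∈ W.data d}
  | .any, u => {u' | ∃ d q, W.adoc u = some d ∧ (⟨.uri u, q, .uri u'⟩ : RDFTriple) ∈ W.data d}
  | .seq n1 n2, u =>
      {u'' | ∃ u', u' ∈ nlEval W n1 u ∧ (W.adoc u').isSome ∧ u'' ∈ nlEval W n2 u'}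
  | .alt n1 n2, u => nlEval W n1 u ∪ nlEval W n2 u
  | .star n, u =>
      {u' | Relation.ReflTransGen (fun a b => (W.adoc a).isSome ∧ b ∈ nlEval W n a) u u'}
  | .ask n P, u =>
      {u' | u' ∈ nlEval W n u ∧
        ∃ d, W.adoc u' = some d ∧ evalGP (askDS W d) P ((W.data d : Finset RDFTriple) : Set RDFTriple) ≠ ∅}

/-! ### Variables occurring in patterns and NautiLOD expressions -/

def condHasVar (v : Var) : Cond → Prop
  | .eq a b => a = .var v ∨ b = .var v
  | .neq a b => a = .var v ∨ b = .var v
  | .and c1 c2 => condHasVar v c1 ∨ condHasVar v c2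
  | .or c1 c2 => condHasVar v c1 ∨ condHasVar v c2
  | .not c => condHasVar v c

/-- The variable `v` occurs in the SPARQL graph pattern. -/
def gpHasVar (v : Var) : GP → Prop
  | .empty => False
  | .tp t => t.sj = .var v ∨ t.pr = .var v ∨ t.ob = .var v
  | .and g1 g2 => gpHasVar v g1 ∨ gpHasVar v g2
  | .union g1 g2 => gpHasVar v g1 ∨ gpHasVar v g2
  | .opt g1 g2 => gpHasVar v g1 ∨ gpHasVar v g2
  | .filter g c => gpHasVar v g ∨ condHasVar v c
  | .graphU _ g => gpHasVar v g
  | .graphV w g => v = w ∨ gpHasVar v g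
  | .bind g _ w => v = w ∨ gpHasVar v g

/-- The variable `v` occurs in the NautiLOD expression. -/
def nlodHasVar (v : Var) : NLOD → Prop
  | .fwd _ => False
  | .bwd _ => False
  | .any => False
  | .seq n1 n2 => nlodHasVar v n1 ∨ nlodHasVar v n2
  | .alt n1 n2 => nlodHasVar v n1 ∨ nlodHasVar v n2
  | .star n => nlodHasVar v n
  | .ask n P => nlodHasVar v n ∨ gpHasVar v P

/-! ### Reachability-based query semantics -/

/-- A reachability criterion. -/
def ReachCrit := RDFTriple → URI → GP → Prop

def cAll : ReachCrit := fun _ _ _ => True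

def cNone : ReachCrit := fun _ _ _ => False

/-- The list of triple patterns occurring in a SPARQL graph pattern. -/
def GP.tps : GP → List TriplePattern
  | .empty => []
  | .tp t => [t]
  | .and g1 g2 => g1.tps ++ g2.tps
  | .union g1 g2 => g1.tps ++ g2.tps
  | .opt g1 g2 => g1.tps ++ g2.tps
  | .filter g _ => g.tps
  | .graphU _ g => g.tps
  | .graphV _ g => g.tps
  | .bind g _ _ => g.tps

def cMatch : ReachCrit := fun t _ P => ∃ (μ : Mapping) (tp : TriplePattern),
  tp ∈ P.tps ∧ tpInst μ tp = some t

/-- `(c,S,P)`-reachability of a document in `W`. -/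
inductive Reachable (W : Web) (c : ReachCrit) (S : Set URI) (P : GP) : Doc → Prop where
  | seed (u : URI) (d : Doc) : u ∈ S → W.adoc u = some d → Reachable W c S P d
  | step (dsrc : Doc) (t : RDFTriple) (u : URI) (d : Doc) :
      Reachable W c S P dsrc → W.edge dsrc t u d → c t u P → Reachable W c S P d

/-- The RDF graph consisting of all triples of all `(c,S,P)`-reachable documents. -/
def reachGraph (W : Web) (c : ReachCrit) (S : Set URI) (P : GP) : Set RDFTriple :=
  {t | ∃ d, Reachable W c S P d ∧ t ∈ W.data d}

/-- The S-based evaluation of `P` over `W` under `c`-semantics. -/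
def reachEval (W : Web) (c : ReachCrit) (S : Set URI) (P : GP) : Set Mapping :=
  evalGP ⟨reachGraph W c S P, fun _ => none⟩ P (reachGraph W c S P)

/-! ### Constructions used in Theorems on c_Match and NautiLOD -/

def addFilter (v : Var) (pt : PTerm) (g : GP) : GP :=
  match pt with
  | .var _ => g
  | .term o => .filter g (.eq (.var v) (.term o))

/-- The basic LDQL query `q_k = ⟨ε,P_k⟩` associated with a triple pattern. -/
def matchQ (vs vp vo : Var) (t : TriplePattern) : LDQL :=
  .base .eps (addFilter vo t.ob (addFilter vp t.pr (addFilter vs t.sj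
    (.tp ⟨.var vs, .var vp, .var vo⟩))))

/-- An LPE whose evaluation is empty everywhere. -/
def emptyLPE (v : Var) : LPE := .sub v (.base .eps .empty)

/-- The LPE `l_Match` associated with a SPARQL graph pattern. -/
def lMatch (vs vp vo : Var) (P : GP) : LPE :=
  .star ((P.tps.map (fun t =>
      LPE.alt (.sub vs (matchQ vs vp vo t))
        (LPE.alt (.sub vp (matchQ vs vp vo t)) (.sub vo (matchQ vs vp vo t))))).foldr
    LPE.alt (emptyLPE vs))

/-- The translation `trans_N` from NautiLOD expressions to LPEs, using the
(fresh, pairwise distinct) variables `vx`, `vu`, `vp`. -/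
def transN (vx vu vp : Var) : NLOD → LPE
  | .fwd p => .pat ⟨.plus, .uri p, .star⟩
  | .bwd p => .pat ⟨.star, .uri p, .plus⟩
  | .any => .sub vx (.base .eps (.graphV vu (.tp ⟨.var vu, .var vp, .var vx⟩)))
  | .seq n1 n2 => .seq (transN vx vu vp n1) (transN vx vu vp n2)
  | .alt n1 n2 => .alt (transN vx vu vp n1) (transN vx vu vp n2)
  | .star n => .star (transN vx vu vp n)
  | .ask n P => .seq (transN vx vu vp n) (.test (.sub vx (.base .eps (.graphV vx P))))


/-!
Each of the three criteria follows a link `(t, u)` exactly when `t` is an instance of one of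
finitely many triple patterns: every triple for `c_All` (one pattern of three distinct
variables), none for `c_None`, the triple patterns of `P` for `c_Match`. For a triple pattern
`tp`, the URIs occurring in instances of `tp` in the document of `uctx` are computed by the
LPE `⟨?v, ⟨ε, tp⟩⟩` for each variable position `?v` of `tp`, and by
`⟨?x, ⟨ε, BIND(tp, w, ?x)⟩⟩` with a fresh `?x` for each constant URI `w` of `tp`.
The Kleene star of the union of these LPEs therefore reaches exactly the documents that are
`(c,S,P)`-reachable. Finally, the dataset of the reachability semantics has no named graphs,
so replacing every GRAPH subpattern of `P` by an unsatisfiable pattern makes the evaluation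
independent of the named graphs that LDQL provides.
-/

def falseGP : GP := .filter .empty (.neq (.term (.uri 0)) (.term (.uri 0)))

def eraseGraph : GP → GP
  | .empty => .empty
  | .tp t => .tp t
  | .and g1 g2 => .and (eraseGraph g1) (eraseGraph g2)
  | .union g1 g2 => .union (eraseGraph g1) (eraseGraph g2)
  | .opt g1 g2 => .opt (eraseGraph g1) (eraseGraph g2)
  | .filter g c => .filter (eraseGraph g) c
  | .graphU _ _ => falseGP
  | .graphV _ _ => falseGP
  | .bind g o v => .bind (eraseGraph g) o v

lemma evalGP_eraseGraph (D D₀ : RDFDataset) (h : D₀.named = fun _ => none) (g : GP)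
    (G : Set RDFTriple) : evalGP D (eraseGraph g) G = evalGP D₀ g G := by
  induction g generalizing G <;>
    simp_all [eraseGraph, evalGP, falseGP, condHolds, pval]

section Reachability

/-- Unlike a link-graph edge, a link step may end in a URI without a document. -/
def linkStep (W : Web) (c : ReachCrit) (P : GP) (a b : URI) : Prop :=
  ∃ d, W.adoc a = some d ∧ ∃ t ∈ W.data d, c t b P ∧ b ∈ urisOf t

variable {W : Web} {c : ReachCrit} {P : GP}

lemma reachable_iff {S : Set URI} {d : Doc} :
    Reachable W c S P d ↔
      ∃ u ∈ S, ∃ u', Relation.ReflTransGen (linkStep W c P) u u' ∧ W.adoc u' = some d := by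
  constructor
  · intro hd
    induction hd with
    | seed u d hu ha => exact ⟨u, hu, u, .refl, ha⟩
    | step dsrc t u d _ hedge hc ih =>
      obtain ⟨u₀, hu₀, u₁, hpath, hu₁⟩ := ih
      obtain ⟨-, ht, hu, had⟩ := hedge
      exact ⟨u₀, hu₀, u, hpath.tail ⟨dsrc, hu₁, t, ht, hc, hu⟩, had⟩
  · rintro ⟨u, hu, u', hpath, hu'⟩
    induction hpath generalizing d with
    | refl => exact .seed u d hu hu'
    | tail _ hstep ih =>
      obtain ⟨db, hb, t, ht, hc, hu⟩ := hstep
      exact .step db t _ d (ih hb) ⟨W.adoc_mem _ db hb, ht, hu, hu'⟩ hc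

lemma isSome_adoc_of_reflTransGen {u u' : URI} {d : Doc}
    (hpath : Relation.ReflTransGen (linkStep W c P) u u') (hu' : W.adoc u' = some d) :
    (W.adoc u).isSome := by
  rcases hpath.cases_head with rfl | ⟨_, ⟨d₀, hd₀, -⟩, -⟩
  · simp [hu']
  · simp [hd₀]

variable {l : LPE} (hl : ∀ a b, b ∈ evalL W l a ↔ linkStep W c P a b)
include hl

lemma reachGraph_eq_dflt_star (S : Set URI) :
    reachGraph W c S P = (datasetW W {u' | ∃ u ∈ S, u' ∈ evalL W (.star l) u}).dflt := by
  have hstep : (fun a b => b ∈ evalL W l a) = linkStep W c P := by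
    funext a b; exact propext (hl a b)
  ext t
  simp only [reachGraph, datasetW, evalL, hstep, reachable_iff, Set.mem_ofPred_eq]
  constructor
  · rintro ⟨d, ⟨u, hu, u', hpath, hu'⟩, ht⟩
    exact ⟨u', ⟨u, hu, isSome_adoc_of_reflTransGen hpath hu', hpath⟩, d, hu', ht⟩
  · rintro ⟨u', ⟨u, hu, -, hpath⟩, d, hu', ht⟩
    exact ⟨d, ⟨u, hu, u', hpath, hu'⟩, ht⟩

lemma reachEval_eq_evalQ_star (S : Set URI) :
    reachEval W c S P = evalQ W (.base (.star l) (eraseGraph P)) S := by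
  rw [evalQ, ← reachGraph_eq_dflt_star hl, reachEval,
    evalGP_eraseGraph _ ⟨reachGraph W c S P, fun _ => none⟩ rfl]

end Reachability

def matchesTP (tp : TriplePattern) (t : RDFTriple) : Prop := ∃ μ, tpInst μ tp = some t

lemma PTerm.mem_varsOf {pt : PTerm} {v : Var} : v ∈ pt.varsOf ↔ pt = .var v := by
  cases pt <;> simp [PTerm.varsOf, eq_comm]

lemma eq_toObj_of_objToSubj {o : Obj} {s : Subj} (h : objToSubj o = some s) : o = s.toObj := by
  cases o <;> cases h <;> rfl

lemma eq_uri_of_objToURI {o : Obj} {p : URI} (h : objToURI o = some p) : o = .uri p := by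
  cases o <;> cases h; rfl

lemma pval_of_tpInst {μ : Mapping} {tp : TriplePattern} {t : RDFTriple}
    (h : tpInst μ tp = some t) :
    pval μ tp.sj = some t.s.toObj ∧ pval μ tp.pr = some (.uri t.p) ∧
      pval μ tp.ob = some t.o := by
  simp only [tpInst, Option.bind_eq_bind, Option.bind_eq_some_iff, Option.pure_def,
    Option.some.injEq] at h
  obtain ⟨so, hso, s, hs, po, hpo, p, hp, o, ho, rfl⟩ := h
  exact ⟨eq_toObj_of_objToSubj hs ▸ hso, eq_uri_of_objToURI hp ▸ hpo, ho⟩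

def restrictTo (V : Set Var) (μ : Mapping) : Mapping := fun v => if v ∈ V then μ v else none

lemma pval_restrictTo {V : Set Var} {pt : PTerm} (h : pt.varsOf ⊆ V) (μ : Mapping) :
    pval (restrictTo V μ) pt = pval μ pt := by
  cases pt with
  | var v => simp [pval, restrictTo, h (PTerm.mem_varsOf.mpr rfl)]
  | term o => rfl

lemma exists_mem_evalGP_tp (D : RDFDataset) {G : Set RDFTriple} {tp : TriplePattern}
    {t : RDFTriple} (ht : t ∈ G) (h : matchesTP tp t) :
    ∃ μ ∈ evalGP D (.tp tp) G, tpInst μ tp = some t := by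
  obtain ⟨μ, hμ⟩ := h
  have hinst : tpInst (restrictTo tp.varsOf μ) tp = some t := by
    simpa only [tpInst, TriplePattern.varsOf,
      pval_restrictTo (Set.subset_union_left.trans Set.subset_union_left),
      pval_restrictTo (Set.subset_union_right.trans Set.subset_union_left),
      pval_restrictTo Set.subset_union_right] using hμ
  refine ⟨_, ⟨?_, t, ht, hinst⟩, hinst⟩
  obtain ⟨hs, hp, ho⟩ := pval_of_tpInst hμ
  ext v
  simp only [mdom, restrictTo, Set.mem_ofPred_eq, TriplePattern.varsOf, Set.mem_union,
    PTerm.mem_varsOf]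
  split_ifs with hv
  · simp only [hv, iff_true]
    rcases hv with (hv | hv) | hv <;> simp_all [pval]
  · simp [hv]

lemma eq_none_of_mem_evalGP_tp {D : RDFDataset} {G : Set RDFTriple} {tp : TriplePattern}
    {μ : Mapping} (hμ : μ ∈ evalGP D (.tp tp) G) {v : Var} (hv : v ∉ tp.varsOf) :
    μ v = none := by
  by_contra h
  exact hv (hμ.1 ▸ h)

lemma TriplePattern.varsOf_finite (tp : TriplePattern) : tp.varsOf.Finite := by
  have h : ∀ pt : PTerm, pt.varsOf.Finite := by
    rintro (_ | _) <;> simp [PTerm.varsOf]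
  exact ((h _).union (h _)).union (h _)

def freshVar (tp : TriplePattern) : Var := tp.varsOf_finite.infinite_compl.nonempty.some

lemma freshVar_notMem (tp : TriplePattern) : freshVar tp ∉ tp.varsOf :=
  tp.varsOf_finite.infinite_compl.nonempty.some_mem

lemma evalQ_base_eps (W : Web) (g : GP) {a : URI} {d : Doc} (ha : W.adoc a = some d) :
    evalQ W (.base .eps g) {a} = evalGP (datasetW W {a}) g ↑(W.data d) := by
  have hU : {u' | ∃ u ∈ ({a} : Set URI), u' ∈ evalL W .eps u} = {a} := by
    ext u'; simp [evalL, ha]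
  have hG : (datasetW W {a}).dflt = ↑(W.data d) := by
    ext t; simp [datasetW, ha]
  rw [evalQ, hU, hG]

lemma evalL_sub_base_eps (W : Web) (v : Var) (g : GP) (a : URI) :
    evalL W (.sub v (.base .eps g)) a =
      {b | ∃ d, W.adoc a = some d ∧
        ∃ μ ∈ evalGP (datasetW W {a}) g ↑(W.data d), μ v = some (.uri b)} := by
  ext b
  simp only [evalL, Set.mem_ofPred_eq, Option.isSome_iff_exists]
  constructor
  · rintro ⟨⟨d, hd⟩, hμ⟩
    exact ⟨d, hd, evalQ_base_eps W g hd ▸ hμ⟩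
  · rintro ⟨d, hd, hμ⟩
    exact ⟨⟨d, hd⟩, (evalQ_base_eps W g hd).symm ▸ hμ⟩

lemma evalL_emptyLPE (W : Web) (v : Var) (a : URI) : evalL W (emptyLPE v) a = ∅ := by
  ext b
  simp [emptyLPE, evalL_sub_base_eps, evalGP, emptyMap]

def posLPE (tp : TriplePattern) : PTerm → LPE
  | .var v => .sub v (.base .eps (.tp tp))
  | .term (.uri w) => .sub (freshVar tp) (.base .eps (.bind (.tp tp) (.uri w) (freshVar tp)))
  | .term _ => emptyLPE 0

lemma evalL_posLPE {tp : TriplePattern} {pt : PTerm} {ρ : RDFTriple → Obj}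
    (hρ : ∀ μ t, tpInst μ tp = some t → pval μ pt = some (ρ t)) (W : Web) (a : URI) :
    evalL W (posLPE tp pt) a =
      {b | ∃ d, W.adoc a = some d ∧ ∃ t ∈ W.data d, matchesTP tp t ∧ ρ t = .uri b} := by
  ext b
  rcases pt with v | (w | _ | _)
  · simp only [posLPE, evalL_sub_base_eps, evalGP, Set.mem_ofPred_eq]
    constructor
    · rintro ⟨d, hd, μ, ⟨-, t, ht, hμ⟩, hv⟩
      exact ⟨d, hd, t, ht, ⟨μ, hμ⟩, Option.some.inj ((hρ μ t hμ).symm.trans hv)⟩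
    · rintro ⟨d, hd, t, ht, hmatch, hb⟩
      obtain ⟨μ, hμmem, hμ⟩ := exists_mem_evalGP_tp (datasetW W {a}) ht hmatch
      exact ⟨d, hd, μ, hμmem, hb ▸ hρ μ t hμ⟩
  · simp only [posLPE, evalL_sub_base_eps, evalGP, Set.mem_ofPred_eq]
    constructor
    · rintro ⟨d, hd, _, ⟨μ, ⟨-, t, ht, hμ⟩, hx, rfl⟩, hv⟩
      refine ⟨d, hd, t, ht, ⟨μ, hμ⟩, ?_⟩
      have hw : ρ t = .uri w := by simpa [pval, eq_comm] using hρ μ t hμ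
      simpa [munion, single, hx, hw] using hv
    · rintro ⟨d, hd, t, ht, hmatch, hb⟩
      obtain ⟨μ, hμmem, hμ⟩ := exists_mem_evalGP_tp (datasetW W {a}) ht hmatch
      have hx := eq_none_of_mem_evalGP_tp hμmem (freshVar_notMem tp)
      obtain rfl : w = b := by simpa [pval, hb] using hρ μ t hμ
      exact ⟨d, hd, _, ⟨μ, hμmem, hx, rfl⟩, by simp [munion, single, hx]⟩
  all_goals
    simp only [posLPE, evalL_emptyLPE, Set.mem_empty_iff_false, false_iff]
    rintro ⟨d, -, t, -, ⟨μ, hμ⟩, hb⟩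
    simpa [pval, hb] using hρ μ t hμ

def tpLPE (tp : TriplePattern) : LPE :=
  .alt (posLPE tp tp.sj) (.alt (posLPE tp tp.pr) (posLPE tp tp.ob))

lemma mem_evalL_tpLPE {W : Web} {tp : TriplePattern} {a b : URI} :
    b ∈ evalL W (tpLPE tp) a ↔
      ∃ d, W.adoc a = some d ∧ ∃ t ∈ W.data d, matchesTP tp t ∧ b ∈ urisOf t := by
  have hs := evalL_posLPE (tp := tp) (ρ := fun t => t.s.toObj)
    (fun _ _ h => (pval_of_tpInst h).1) W a
  have hp := evalL_posLPE (tp := tp) (ρ := fun t => .uri t.p)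
    (fun _ _ h => (pval_of_tpInst h).2.1) W a
  have ho := evalL_posLPE (tp := tp) (ρ := fun t => t.o)
    (fun _ _ h => (pval_of_tpInst h).2.2) W a
  have huris : ∀ t : RDFTriple, b ∈ urisOf t ↔
      t.s.toObj = .uri b ∨ Obj.uri t.p = .uri b ∨ t.o = .uri b := by
    rintro ⟨s | s, p, o⟩ <;> simp [urisOf, Subj.toObj]
  simp only [tpLPE, evalL, Set.mem_union, hs, hp, ho, Set.mem_ofPred_eq, huris]
  grind

def matchLPE (tps : List TriplePattern) : LPE := (tps.map tpLPE).foldr .alt (emptyLPE 0)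

lemma mem_evalL_matchLPE {W : Web} {tps : List TriplePattern} {a b : URI} :
    b ∈ evalL W (matchLPE tps) a ↔
      ∃ d, W.adoc a = some d ∧
        ∃ t ∈ W.data d, (∃ tp ∈ tps, matchesTP tp t) ∧ b ∈ urisOf t := by
  induction tps with
  | nil => simp [matchLPE, evalL_emptyLPE]
  | cons tp tps ih =>
    simp only [matchLPE, List.map_cons, List.foldr_cons] at ih ⊢
    rw [evalL, Set.mem_union, ih, mem_evalL_tpLPE]
    grind

def anyTP : TriplePattern := ⟨.var 0, .var 1, .var 2⟩

lemma matchesTP_anyTP (t : RDFTriple) : matchesTP anyTP t := by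
  refine ⟨fun v => if v = 0 then some t.s.toObj else if v = 1 then some (.uri t.p)
    else if v = 2 then some t.o else none, ?_⟩
  obtain ⟨s | s, p, o⟩ := t <;> rfl

/-- For `c ∈ {c_All, c_None, c_Match}`, every SPARQL graph
pattern under `c`-semantics can be expressed as an LDQL query. -/
theorem reachability_expressible_in_LDQL (c : ReachCrit)
    (hc : c = cAll ∨ c = cNone ∨ c = cMatch) (P : GP) :
    ∃ q : LDQL, ∀ (W : Web) (S : Set URI), S.Finite →
      reachEval W c S P = evalQ W q S := by
  obtain ⟨tps, htps⟩ : ∃ tps : List TriplePattern,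
      ∀ t u, c t u P ↔ ∃ tp ∈ tps, matchesTP tp t := by
    rcases hc with rfl | rfl | rfl
    · exact ⟨[anyTP], fun t _ => by simp [cAll, matchesTP_anyTP]⟩
    · exact ⟨[], fun _ _ => by simp [cNone]⟩
    · exact ⟨P.tps, fun _ _ => by simp only [cMatch, matchesTP]; grind⟩
  refine ⟨.base (.star (matchLPE tps)) (eraseGraph P), fun W S _ => ?_⟩
  refine reachEval_eq_evalQ_star (fun a b => ?_) S
  simp only [mem_evalL_matchLPE, linkStep, htps]

end

end LDQLFormal
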